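/- arXiv:1902.08414 — 3 statements merged into one kernel-verified Lean document; each statement's English description precedes it below -/
import Mathlib

section
/- Let C be an n-element subset of ℚ and let S ⊊ C be a proper subset. Then S is not a support of C in P_n(ℚ): there exists a monotone bijection π of ℚ fixing every element of S but with π(C) ≠ C. Consequently, C is the least support of itself. -/
/-!
Every element `c` of `C` can be moved while everything else in `C ∪ S` stays put: a finite
set leaves a gap `(c - r, c + r)` around `c`, and a piecewise-linear homeomorphism supported
in that gap pushes `c` to `c + r / 2`. When `c ∉ S`, such a map fixes `S` pointwise but does
not map `C` onto itself.
-/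

section LinearOrderedField

variable {𝕜 : Type*} [Field 𝕜] [LinearOrder 𝕜] [IsStrictOrderedRing 𝕜]

def bumpEquiv (c r : 𝕜) : 𝕜 ≃ 𝕜 where
  toFun x :=
    if x ≤ c - r then x else if x ≤ c then (3 * x - c + r) / 2
    else if x ≤ c + r then (x + c + r) / 2 else x
  invFun y :=
    if y ≤ c - r then y else if y ≤ c + r / 2 then (2 * y + c - r) / 3
    else if y ≤ c + r then 2 * y - c - r else y
  left_inv x := by
    dsimp only
    split_ifs <;> linarith
  right_inv y := by
    dsimp only
    split_ifs <;> linarith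

theorem bumpEquiv_apply (c r x : 𝕜) :
    bumpEquiv c r x =
      if x ≤ c - r then x else if x ≤ c then (3 * x - c + r) / 2
      else if x ≤ c + r then (x + c + r) / 2 else x :=
  rfl

theorem bumpEquiv_strictMono {r : 𝕜} (c : 𝕜) (hr : 0 < r) : StrictMono (bumpEquiv c r) := by
  intro x y hxy
  simp only [bumpEquiv_apply]
  split_ifs <;> linarith

theorem bumpEquiv_apply_of_le_or_le {c r x : 𝕜} (hx : x ≤ c - r ∨ c + r ≤ x) :
    bumpEquiv c r x = x := by
  rw [bumpEquiv_apply]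
  rcases hx with hx | hx <;> split_ifs <;> linarith

theorem bumpEquiv_apply_self {r : 𝕜} (c : 𝕜) (hr : 0 < r) : bumpEquiv c r c = c + r / 2 := by
  rw [bumpEquiv_apply]
  split_ifs <;> linarith

variable [TopologicalSpace 𝕜] [OrderTopology 𝕜]

theorem Set.Finite.exists_pos_gap {F : Set 𝕜} (hF : F.Finite) (c : 𝕜) :
    ∃ r > 0, ∀ x ∈ F, x ≠ c → x ≤ c - r ∨ c + r ≤ x := by
  have hnhds : (F \ {c})ᶜ ∈ nhds c :=
    hF.sdiff.isClosed.isOpen_compl.mem_nhds fun h => h.2 rfl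
  obtain ⟨l, u, ⟨hlc, hcu⟩, hsub⟩ := mem_nhds_iff_exists_Ioo_subset.mp hnhds
  refine ⟨min (c - l) (u - c), lt_min (sub_pos.mpr hlc) (sub_pos.mpr hcu), fun x hx hxc => ?_⟩
  by_contra! hgap
  have hmem : x ∈ Set.Ioo l u :=
    ⟨by linarith [min_le_left (c - l) (u - c)], by linarith [min_le_right (c - l) (u - c)]⟩
  exact hsub hmem ⟨hx, hxc⟩

theorem Set.Finite.exists_strictMono_equiv_fixing_erase {F : Set 𝕜} (hF : F.Finite) (c : 𝕜) :
    ∃ π : 𝕜 ≃ 𝕜, StrictMono π ∧ (∀ x ∈ F, x ≠ c → π x = x) ∧ π c ≠ c := by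
  obtain ⟨r, hr, hgap⟩ := hF.exists_pos_gap c
  refine ⟨bumpEquiv c r, bumpEquiv_strictMono c hr,
    fun x hx hxc => bumpEquiv_apply_of_le_or_le (hgap x hx hxc), ?_⟩
  rw [bumpEquiv_apply_self c hr]
  linarith

end LinearOrderedField

theorem Set.image_ne_self_of_fixing_erase {α : Type*} {π : α → α} {C : Set α} {c : α}
    (hc : c ∈ C) (hfix : ∀ x ∈ C, x ≠ c → π x = x) (hmove : π c ≠ c) : π '' C ≠ C := by
  intro himage
  obtain ⟨x, hx, hxc⟩ : c ∈ π '' C := himage.symm ▸ hc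
  by_cases hxeq : x = c
  · exact hmove (hxeq ▸ hxc)
  · exact hxeq (hfix x hx hxeq ▸ hxc)

theorem Finset.exists_strictMono_equiv_fixing_image_ne (S C : Finset ℚ) {c : ℚ}
    (hcC : c ∈ C) (hcS : c ∉ S) :
    ∃ π : ℚ ≃ ℚ, StrictMono π ∧ (∀ s ∈ S, π s = s) ∧ π '' (C : Set ℚ) ≠ (C : Set ℚ) := by
  obtain ⟨π, hmono, hfix, hmove⟩ := (S ∪ C).finite_toSet.exists_strictMono_equiv_fixing_erase c
  refine ⟨π, hmono, fun s hs => hfix s (by simp [hs]) (ne_of_mem_of_not_mem hs hcS), ?_⟩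
  exact Set.image_ne_self_of_fixing_erase hcC (fun x hx => hfix x (by simp [hx])) hmove

theorem stmt_4_general (C : Finset ℚ) :
    (∀ S : Finset ℚ, S ⊂ C →
      ∃ π : ℚ ≃ ℚ, StrictMono π ∧ (∀ s ∈ S, π s = s) ∧
        π '' (C : Set ℚ) ≠ (C : Set ℚ)) ∧
    (∀ S : Finset ℚ,
      (∀ π : ℚ ≃ ℚ, StrictMono π → (∀ s ∈ S, π s = s) →
        π '' (C : Set ℚ) = (C : Set ℚ)) → C ⊆ S) := by
  refine ⟨fun S hS => ?_, fun S hsupp c hcC => ?_⟩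
  · obtain ⟨c, hcC, hcS⟩ := Finset.exists_of_ssubset hS
    exact S.exists_strictMono_equiv_fixing_image_ne C hcC hcS
  · by_contra hcS
    obtain ⟨π, hmono, hfix, hmoved⟩ := S.exists_strictMono_equiv_fixing_image_ne C hcC hcS
    exact hmoved (hsupp π hmono hfix)

/-- No proper subset `S ⊊ C` supports `C` in `P_n(ℚ)`: some monotone bijection
fixes `S` pointwise but moves `C`.  Consequently `C` is its own least support:
it is contained in every support of itself. -/
theorem stmt_4 (n : ℕ) (C : Finset ℚ) (hC : C.card = n) :
    (∀ S : Finset ℚ, S ⊂ C →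
      ∃ π : ℚ ≃ ℚ, StrictMono π ∧ (∀ s ∈ S, π s = s) ∧
        π '' (C : Set ℚ) ≠ (C : Set ℚ)) ∧
    (∀ S : Finset ℚ,
      (∀ π : ℚ ≃ ℚ, StrictMono π → (∀ s ∈ S, π s = s) →
        π '' (C : Set ℚ) = (C : Set ℚ)) → C ⊆ S) :=
  stmt_4_general C
end

section
/- The set of integers ℤ, as an element of the powerset of ℚ with the direct-image action of monotone bijections, has no finite support: for every finite S ⊆ ℚ there exists a monotone bijection π of ℚ fixing S pointwise with π(ℤ) ≠ ℤ. -/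
/-!
Pick an integer `n` above every element of `S` and let `π` fix `(-∞, n]` while stretching
`[n, ∞)` by the factor `2` about `n`. Then `π` fixes `S`, but `π⁻¹ (n + 1) = n + 1/2` is not an
integer, so the integer `n + 1` is not in `π '' ℤ`.
-/

section StretchAbove

variable {K : Type*} [Field K] [LinearOrder K] [IsStrictOrderedRing K]

def stretchAbove (a c : K) (hc : 0 < c) : K ≃o K :=
  StrictMono.orderIsoOfRightInverse (fun x ↦ if x ≤ a then x else a + c * (x - a))
    (by
      intro x y hxy
      dsimp only
      split_ifs with hx hy hy
      · exact hxy
      · nlinarith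
      · exact absurd (hxy.le.trans hy) hx
      · nlinarith)
    (fun y ↦ if y ≤ a then y else a + (y - a) / c)
    (by
      intro y
      dsimp only
      split_ifs with hy hy'
      · rfl
      · have hlt : a < a + (y - a) / c := lt_add_of_pos_right a (div_pos (by linarith) hc)
        exact absurd hy' hlt.not_ge
      · field_simp
        ring)

theorem stretchAbove_apply_of_le {a c x : K} (hc : 0 < c) (hx : x ≤ a) :
    stretchAbove a c hc x = x :=
  if_pos hx

theorem stretchAbove_symm_apply_of_lt {a c y : K} (hc : 0 < c) (hy : a < y) :
    (stretchAbove a c hc).symm y = a + (y - a) / c :=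
  if_neg hy.not_ge

end StretchAbove

theorem intCast_add_half_notMem_range (n : ℤ) : (n + 1 / 2 : ℚ) ∉ Set.range ((↑) : ℤ → ℚ) := by
  rw [← Int.fract_eq_zero_iff, Int.fract_intCast_add, Int.fract_eq_self.mpr (by norm_num)]
  norm_num

/-- The set of integers `ℤ ⊆ ℚ` has no finite support under the direct-image
action of monotone bijections. -/
theorem stmt_5 (S : Finset ℚ) :
    ∃ π : ℚ ≃ ℚ, StrictMono π ∧ (∀ s ∈ S, π s = s) ∧
      π '' Set.range ((↑·) : ℤ → ℚ) ≠ Set.range ((↑·) : ℤ → ℚ) := by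
  obtain ⟨q, hq⟩ := S.exists_le
  obtain ⟨n, hqn⟩ := exists_int_ge q
  let π := stretchAbove (n : ℚ) 2 two_pos
  refine ⟨π.toEquiv, π.strictMono,
    fun s hs ↦ stretchAbove_apply_of_le two_pos ((hq s hs).trans hqn), fun hImage ↦ ?_⟩
  have hsucc : ((n + 1 : ℤ) : ℚ) ∈ π.toEquiv '' Set.range ((↑) : ℤ → ℚ) := by
    rw [hImage]
    exact ⟨n + 1, rfl⟩
  rw [Equiv.image_eq_preimage_symm, Set.mem_preimage] at hsucc
  have hpreimage : π.symm ((n + 1 : ℤ) : ℚ) = n + 1 / 2 := by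
    rw [stretchAbove_symm_apply_of_lt two_pos (by push_cast; linarith)]
    push_cast
    ring
  exact intCast_add_half_notMem_range n (hpreimage ▸ hsucc)
end

section
/- Let X and Y be orbit-finite nominal sets over the total order symmetry, represented by multiplicity functions f, g : ℕ → ℕ (where f(n) is the number of orbits of X of dimension n, and similarly for g). Then the number of orbits of X × Y of dimension n equals the sum over all i, j with 0 ≤ i, j ≤ n and i + j ≥ n of f(i)·g(j)·C(n, j)·C(j, n−i). -/
/-!
The least support of a pair `(x, y)` is `supp x ∪ supp y`. Monotone bijections of `ℚ` act
transitively on `n`-element subsets, and one that maps a finite set onto itself fixes it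
pointwise; hence, for a fixed `n`-element set `S`, every orbit of dimension `n` contains exactly
one element with least support `S`. So the orbits of `X × Y` of dimension `n` correspond to pairs
`(x, y)` with `supp x ∪ supp y = S`, that is, to covers `A ∪ B = S` together with an orbit of `X`
of dimension `#A` and an orbit of `Y` of dimension `#B`. The covers with `#A = i` and `#B = j` are
counted by choosing `B` and then `S \ A ⊆ B`: there are `C(n, j) * C(j, n - i)` of them, which
vanishes unless `n ≤ i + j`.
-/

/-- The group of monotone bijections of `ℚ`, as a subgroup of `Equiv.Perm ℚ`. -/
def MonoPerm : Subgroup (Equiv.Perm ℚ) where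
  carrier := {π | StrictMono π}
  one_mem' := strictMono_id
  mul_mem' := fun ha hb => ha.comp hb
  inv_mem' := by
    intro π hπ a b hab
    have := hπ.lt_iff_lt (a := π⁻¹ a) (b := π⁻¹ b)
    simp only [Equiv.Perm.coe_inv, Equiv.apply_symm_apply] at this
    exact this.mp hab

/-- `C` supports `z`. -/
def OSupports {Z : Type*} [MulAction MonoPerm Z] (C : Finset ℚ) (z : Z) : Prop :=
  ∀ g : MonoPerm, (∀ c ∈ C, g • c = c) → g • z = z

/-- `C` is the least support of `z`. -/
def OLeastSupport {Z : Type*} [MulAction MonoPerm Z] (C : Finset ℚ) (z : Z) : Prop :=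
  OSupports C z ∧ ∀ D : Finset ℚ, OSupports D z → C ⊆ D

/-- The number of orbits of `Z` of dimension `n`, i.e. whose elements have a
least support of cardinality `n`. -/
noncomputable def orbitCountDim (Z : Type*) [MulAction MonoPerm Z] (n : ℕ) : ℕ :=
  Set.ncard {O : Quotient (MulAction.orbitRel MonoPerm Z) |
    ∃ z : Z, Quotient.mk _ z = O ∧ ∃ C : Finset ℚ, OLeastSupport C z ∧ C.card = n}

namespace MonoPerm

lemma strictMono_smul (g : MonoPerm) : StrictMono fun q : ℚ => g • q := g.2

def dilateBelow (t r x : ℚ) : ℚ := if t ≤ x then x else t + r * (x - t)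

lemma leftInverse_dilateBelow (t : ℚ) {r : ℚ} (hr : 0 < r) :
    Function.LeftInverse (dilateBelow t r⁻¹) (dilateBelow t r) := by
  intro x
  unfold dilateBelow
  by_cases hx : t ≤ x
  · simp [hx]
  · have : ¬ t ≤ t + r * (x - t) := by nlinarith
    simp only [if_neg hx, if_neg this]
    field_simp
    ring

lemma strictMono_dilateBelow (t : ℚ) {r : ℚ} (hr : 0 < r) : StrictMono (dilateBelow t r) := by
  intro a b hab
  unfold dilateBelow
  split_ifs <;> nlinarith

def dilateBelowPerm (t : ℚ) {r : ℚ} (hr : 0 < r) : MonoPerm :=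
  ⟨⟨dilateBelow t r, dilateBelow t r⁻¹, leftInverse_dilateBelow t hr,
    fun x => by simpa only [inv_inv] using leftInverse_dilateBelow t (inv_pos.2 hr) x⟩,
    strictMono_dilateBelow t hr⟩

lemma exists_smul_eq_fixing_Ici {a b t : ℚ} (ha : a < t) (hb : b < t) :
    ∃ g : MonoPerm, g • a = b ∧ ∀ x, t ≤ x → g • x = x := by
  have hr : 0 < (t - b) / (t - a) := div_pos (by linarith) (by linarith)
  refine ⟨dilateBelowPerm t hr, ?_, fun x hx => if_pos hx⟩
  change dilateBelow t _ a = b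
  rw [dilateBelow, if_neg ha.not_ge]
  field_simp [sub_ne_zero.2 ha.ne']
  ring

lemma exists_smul_eq_of_strictMono {m : ℕ} {c d : Fin m → ℚ} (hc : StrictMono c)
    (hd : StrictMono d) : ∃ g : MonoPerm, ∀ k, g • c k = d k := by
  induction m with
  | zero => exact ⟨1, finZeroElim⟩
  | succ m ih =>
    obtain ⟨g, hg⟩ := ih (hc.comp Fin.strictMono_succ) (hd.comp Fin.strictMono_succ)
    simp only [Function.comp_apply] at hg
    obtain ⟨t, hlo, hhi⟩ := Order.exists_between_finsets {g • c 0, d 0}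
      (Finset.univ.image (d ∘ Fin.succ)) (by
        simp only [Finset.mem_insert, Finset.mem_singleton, Finset.mem_image, Finset.mem_univ,
          true_and, Function.comp_apply]
        rintro x (rfl | rfl) _ ⟨k, rfl⟩
        · rw [← hg k]; exact strictMono_smul g (hc (Fin.succ_pos k))
        · exact hd (Fin.succ_pos k))
    -- `h` fixes `[t, ∞)`, which contains the points `d (k + 1)` already matched by `g`.
    obtain ⟨h, hh, hfix⟩ :=
      exists_smul_eq_fixing_Ici (hlo (g • c 0) (by simp)) (hlo (d 0) (by simp))
    refine ⟨h * g, Fin.cases ?_ fun k => ?_⟩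
    · rw [mul_smul, hh]
    · rw [mul_smul, hg k]
      exact hfix _ (hhi _ (Finset.mem_image_of_mem _ (Finset.mem_univ k))).le

lemma exists_image_smul_eq {C S : Finset ℚ} (h : C.card = S.card) :
    ∃ g : MonoPerm, C.image (g • ·) = S := by
  obtain ⟨g, hg⟩ := exists_smul_eq_of_strictMono (C.orderEmbOfFin rfl).strictMono
    (S.orderEmbOfFin h.symm).strictMono
  refine ⟨g, Finset.coe_injective ?_⟩
  rw [Finset.coe_image, ← Finset.range_orderEmbOfFin C rfl, ← Finset.range_orderEmbOfFin S h.symm,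
    ← Set.range_comp]
  exact congrArg Set.range (funext hg)

lemma smul_eq_self_of_image_smul_eq {g : MonoPerm} {C : Finset ℚ} (h : C.image (g • ·) = C)
    {c : ℚ} (hc : c ∈ C) : g • c = c := by
  have hmem (k : Fin C.card) : g • C.orderEmbOfFin rfl k ∈ C := by
    have := Finset.mem_image_of_mem (g • ·) (C.orderEmbOfFin_mem rfl k)
    rwa [h] at this
  have hfix := Finset.orderEmbOfFin_unique rfl hmem
    ((strictMono_smul g).comp (C.orderEmbOfFin rfl).strictMono)
  obtain ⟨k, rfl⟩ : c ∈ Set.range (C.orderEmbOfFin rfl) := by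
    rwa [Finset.range_orderEmbOfFin]
  exact congrFun hfix k

end MonoPerm

section Supports

variable {Z : Type*} [MulAction MonoPerm Z]

lemma OSupports.smul {C : Finset ℚ} {z : Z} (h : OSupports C z) (g : MonoPerm) :
    OSupports (C.image (g • ·)) (g • z) := by
  intro k hk
  have hconj : (g⁻¹ * k * g) • z = z :=
    h _ fun c hc => by rw [mul_smul, mul_smul, hk _ (Finset.mem_image_of_mem _ hc), inv_smul_smul]
  calc k • g • z = g • (g⁻¹ * k * g) • z := by rw [mul_smul, mul_smul, smul_inv_smul]
    _ = g • z := by rw [hconj]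

lemma OLeastSupport.smul {C : Finset ℚ} {z : Z} (h : OLeastSupport C z) (g : MonoPerm) :
    OLeastSupport (C.image (g • ·)) (g • z) := by
  refine ⟨h.1.smul g, fun D hD => Finset.image_subset_iff.2 fun c hc => ?_⟩
  have hD' : OSupports (D.image (g⁻¹ • ·)) z := by simpa using hD.smul g⁻¹
  obtain ⟨d, hd, rfl⟩ := Finset.mem_image.1 (h.2 _ hD' hc)
  simpa using hd

lemma OLeastSupport.unique {C D : Finset ℚ} {z : Z} (hC : OLeastSupport C z)
    (hD : OLeastSupport D z) : C = D :=
  (hC.2 D hD.1).antisymm (hD.2 C hC.1)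

lemma OLeastSupport.eq_of_smul_eq {C : Finset ℚ} {z z' : Z} (hz : OLeastSupport C z)
    (hz' : OLeastSupport C z') {g : MonoPerm} (hg : g • z = z') : z = z' := by
  have himage : C.image (g • ·) = C := (hg ▸ hz.smul g).unique hz'
  rw [← hg, hz.1 g fun c hc => MonoPerm.smul_eq_self_of_image_smul_eq himage hc]

lemma OLeastSupport.prod {W : Type*} [MulAction MonoPerm W] {C D : Finset ℚ} {z : Z} {w : W}
    (hC : OLeastSupport C z) (hD : OLeastSupport D w) : OLeastSupport (C ∪ D) (z, w) := by
  refine ⟨fun g hg => ?_, fun E hE => Finset.union_subset ?_ ?_⟩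
  · rw [Prod.smul_mk, hC.1 g fun c hc => hg c (Finset.mem_union_left _ hc),
      hD.1 g fun c hc => hg c (Finset.mem_union_right _ hc)]
  · exact hC.2 E fun g hg => congrArg Prod.fst (hE g hg)
  · exact hD.2 E fun g hg => congrArg Prod.snd (hE g hg)

lemma injective_orbitMk_oLeastSupport (C : Finset ℚ) :
    Function.Injective fun z : {z : Z // OLeastSupport C z} =>
      Quotient.mk (MulAction.orbitRel MonoPerm Z) z.1 := by
  rintro ⟨z, hz⟩ ⟨z', hz'⟩ h
  obtain ⟨g, hg⟩ := Quotient.exact h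
  exact Subtype.ext (hz'.eq_of_smul_eq hz hg).symm

lemma finite_oLeastSupport [Finite (Quotient (MulAction.orbitRel MonoPerm Z))] (C : Finset ℚ) :
    Finite {z : Z // OLeastSupport C z} :=
  Finite.of_injective _ (injective_orbitMk_oLeastSupport C)

lemma card_oLeastSupport_eq_orbitCountDim (C : Finset ℚ) :
    Nat.card {z : Z // OLeastSupport C z} = orbitCountDim Z C.card := by
  rw [orbitCountDim, ← Nat.card_coe_set_eq]
  refine Nat.card_congr (Equiv.ofBijective (fun z => ⟨_, z.1, rfl, C, z.2, rfl⟩) ⟨?_, ?_⟩)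
  · exact fun z z' h => injective_orbitMk_oLeastSupport C (congrArg Subtype.val h)
  · rintro ⟨_, z, rfl, D, hD, hcard⟩
    obtain ⟨g, hg⟩ := MonoPerm.exists_image_smul_eq hcard
    exact ⟨⟨g • z, hg ▸ hD.smul g⟩, Subtype.ext (Quotient.sound (MulAction.mem_orbit z g))⟩

end Supports

section Covers

open Finset

variable {α : Type*} [DecidableEq α]

def coverPairs (S : Finset α) : Finset (Finset α × Finset α) :=
  {p ∈ S.powerset ×ˢ S.powerset | p.1 ∪ p.2 = S}

lemma mem_coverPairs {S : Finset α} {p : Finset α × Finset α} :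
    p ∈ coverPairs S ↔ p.1 ∪ p.2 = S := by
  refine ⟨fun h => (mem_filter.1 h).2, fun h => mem_filter.2 ⟨?_, h⟩⟩
  rw [mem_product, mem_powerset, mem_powerset, ← union_subset_iff, h]

/-- A cover `(A, B)` of `S` is determined by `B` and the complement `S \ A ⊆ B`. -/
lemma card_coverPairs_filter_card (S : Finset α) {i : ℕ} (hi : i ≤ #S) (j : ℕ) :
    #{p ∈ coverPairs S | #p.1 = i ∧ #p.2 = j} = (#S).choose j * j.choose (#S - i) := by
  calc #{p ∈ coverPairs S | #p.1 = i ∧ #p.2 = j}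
      = #((S.powersetCard j).sigma fun B => B.powersetCard (#S - i)) := by
        refine card_nbij' (fun p => ⟨p.2, S \ p.1⟩) (fun q => (S \ q.2, q.1)) ?_ ?_ ?_ ?_
        · rintro ⟨A, B⟩ hp
          simp only [coe_filter, Set.mem_ofPred_eq, mem_coverPairs] at hp
          obtain ⟨hcover, hA, hB⟩ := hp
          simp only [coe_sigma, Set.mem_sigma_iff, mem_coe, mem_powersetCard]
          refine ⟨⟨hcover ▸ subset_union_right, hB⟩, sdiff_le_iff.2 hcover.ge, ?_⟩
          rw [card_sdiff_of_subset (hcover ▸ subset_union_left), hA]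
        · rintro ⟨B, E⟩ hq
          simp only [coe_sigma, Set.mem_sigma_iff, mem_coe, mem_powersetCard] at hq
          obtain ⟨⟨hBS, hB⟩, hEB, hE⟩ := hq
          simp only [coe_filter, Set.mem_ofPred_eq, mem_coverPairs]
          refine ⟨union_subset sdiff_subset hBS |>.antisymm ?_, ?_, hB⟩
          · refine sdiff_le_iff.1 ?_
            rwa [Finset.sdiff_sdiff_eq_self (hEB.trans hBS)]
          · rw [card_sdiff_of_subset (hEB.trans hBS), hE]
            omega
        · rintro ⟨A, B⟩ hp
          simp only [coe_filter, Set.mem_ofPred_eq, mem_coverPairs] at hp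
          dsimp only
          rw [Finset.sdiff_sdiff_eq_self (hp.1 ▸ subset_union_left)]
        · rintro ⟨B, E⟩ hq
          simp only [coe_sigma, Set.mem_sigma_iff, mem_coe, mem_powersetCard] at hq
          dsimp only
          rw [Finset.sdiff_sdiff_eq_self (hq.2.1.trans hq.1.1)]
    _ = (#S).choose j * j.choose (#S - i) := by
        rw [card_sigma, sum_congr rfl fun B hB => by
          rw [card_powersetCard, (mem_powersetCard.1 hB).2], sum_const, card_powersetCard,
          smul_eq_mul]

lemma sum_coverPairs (S : Finset α) (F : ℕ → ℕ → ℕ) :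
    ∑ p ∈ coverPairs S, F #p.1 #p.2 =
      ∑ i ∈ range (#S + 1), ∑ j ∈ range (#S + 1),
        if #S ≤ i + j then F i j * (#S).choose j * j.choose (#S - i) else 0 := by
  have hmaps : ∀ p ∈ coverPairs S, (#p.1, #p.2) ∈ range (#S + 1) ×ˢ range (#S + 1) := by
    intro p hp
    have h := mem_coverPairs.1 hp
    simp only [mem_product, mem_range, Nat.lt_succ_iff]
    exact ⟨h ▸ card_le_card subset_union_left, h ▸ card_le_card subset_union_right⟩
  rw [← sum_fiberwise_of_maps_to hmaps, sum_product]
  refine sum_congr rfl fun i hi => sum_congr rfl fun j _ => ?_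
  have hiS : i ≤ #S := Nat.lt_succ_iff.1 (mem_range.1 hi)
  simp only [Prod.mk.injEq]
  rw [sum_congr rfl fun p hp => by rw [(mem_filter.1 hp).2.1, (mem_filter.1 hp).2.2], sum_const,
    card_coverPairs_filter_card S hiS, smul_eq_mul]
  split_ifs with h
  · ring
  · rw [Nat.choose_eq_zero_of_lt (n := j) (k := #S - i) (by omega), mul_zero, zero_mul]

end Covers

section Product

variable {X Y : Type*} [MulAction MonoPerm X] [MulAction MonoPerm Y]

lemma card_oLeastSupport_prod (hXnom : ∀ x : X, ∃ C : Finset ℚ, OLeastSupport C x)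
    (hYnom : ∀ y : Y, ∃ C : Finset ℚ, OLeastSupport C y)
    [Finite (Quotient (MulAction.orbitRel MonoPerm X))]
    [Finite (Quotient (MulAction.orbitRel MonoPerm Y))] (S : Finset ℚ) :
    Nat.card {z : X × Y // OLeastSupport S z} =
      ∑ p ∈ coverPairs S,
        Nat.card {x : X // OLeastSupport p.1 x} * Nat.card {y : Y // OLeastSupport p.2 y} := by
  have := finite_oLeastSupport (Z := X)
  have := finite_oLeastSupport (Z := Y)
  simp only [← Nat.card_prod, ← Finset.sum_coe_sort (coverPairs S)]
  rw [← Nat.card_sigma]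
  symm
  refine Nat.card_congr (Equiv.ofBijective
    (fun q => ⟨(q.2.1.1, q.2.2.1), by
      simpa only [mem_coverPairs.1 q.1.2] using q.2.1.2.prod q.2.2.2⟩) ⟨?_, ?_⟩)
  · rintro ⟨⟨⟨A, B⟩, hp⟩, ⟨x, hx⟩, ⟨y, hy⟩⟩ ⟨⟨⟨A', B'⟩, hp'⟩, ⟨x', hx'⟩, ⟨y', hy'⟩⟩ h
    simp only [Subtype.mk.injEq, Prod.mk.injEq] at h
    obtain ⟨rfl, rfl⟩ := h
    obtain rfl := hx.unique hx'
    obtain rfl := hy.unique hy'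
    rfl
  · rintro ⟨⟨x, y⟩, hS⟩
    obtain ⟨A, hA⟩ := hXnom x
    obtain ⟨B, hB⟩ := hYnom y
    have hcover : (A, B) ∈ coverPairs S := mem_coverPairs.2 ((hA.prod hB).unique hS)
    exact ⟨⟨⟨(A, B), hcover⟩, ⟨x, hA⟩, ⟨y, hB⟩⟩, rfl⟩

end Product

/-- Orbit counting for products: if the orbit-finite nominal sets `X` and `Y`
are represented by the multiplicity functions `f` and `g`, then the number of
orbits of `X × Y` of dimension `n` is
`∑_{i,j ≤ n, i+j ≥ n} f i * g j * C(n,j) * C(j, n-i)`. -/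
theorem stmt_13 {X Y : Type*} [MulAction MonoPerm X] [MulAction MonoPerm Y]
    (hXnom : ∀ x : X, ∃ C : Finset ℚ, OLeastSupport C x)
    (hYnom : ∀ y : Y, ∃ C : Finset ℚ, OLeastSupport C y)
    (hXfin : Finite (Quotient (MulAction.orbitRel MonoPerm X)))
    (hYfin : Finite (Quotient (MulAction.orbitRel MonoPerm Y)))
    (f g : ℕ → ℕ)
    (hf : ∀ n, f n = orbitCountDim X n)
    (hg : ∀ n, g n = orbitCountDim Y n)
    (n : ℕ) :
    orbitCountDim (X × Y) n =
      ∑ i ∈ Finset.range (n + 1), ∑ j ∈ Finset.range (n + 1),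
        if n ≤ i + j then f i * g j * n.choose j * j.choose (n - i) else 0 := by
  obtain ⟨S, rfl⟩ : ∃ S : Finset ℚ, S.card = n :=
    ⟨(Finset.range n).map Nat.castEmbedding, by simp⟩
  rw [← card_oLeastSupport_eq_orbitCountDim, card_oLeastSupport_prod hXnom hYnom]
  simp only [card_oLeastSupport_eq_orbitCountDim, ← hf, ← hg]
  exact sum_coverPairs S fun i j => f i * g j
end
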